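/- arXiv:2510.02948 — 4 statements merged into one kernel-verified Lean document; each statement's English description precedes it below -/
import Mathlib

section
/- Let k ≤ n, let D be a symmetric n×n real matrix with D_{ij} = 0 whenever i > k or j > k, let q ∈ ℝⁿ with q ≥ 0 and q_i = 0 for i > k, let β ≥ 0, F ∈ ℝ^{M×n} and w ∈ ℝ^M. For i ∈ {1,…,k} define μ*_i := inf{ qᵀy + β y₀ : y ∈ ℝⁿ, y₀ ∈ ℝ, D_iᵀ y + q_i y₀ = −1, F y ≤ y₀ w, y ≥ 0, y₀ ≥ 0 } ∈ [0, +∞] (with μ*_i = +∞ if the feasible set is empty; D_i denotes the i-th column of D). If μ*_i > 0, then there exist v ∈ ℝ^M and s ∈ ℝⁿ with v ≥ 0, s ≥ 0 such that (μ*_i)^{-1} q + D_i + Fᵀv − s = 0 and (μ*_i)^{-1} β + q_i − wᵀv ≥ 0, where by convention (+∞)^{-1} = 0. -/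
/-!
By Farkas' lemma, either the dual system has a solution, which is the certificate, or there is a
nonnegative `(y, y₀)` with `F y ≤ y₀ w` and `μ⁻¹ (qᵀy + β y₀) + (D_iᵀ y + q_i y₀) < 0`. Since
`q, β ≥ 0` the second bracket is negative, so rescaling `(y, y₀)` makes it `-1`; this is a
feasible point of the primal program whose value is below `μ*_i`, a contradiction.

Farkas' lemma itself comes from separating `b` from the cone spanned by the columns of `A`; this
cone is closed because, by the conic Carathéodory theorem, it is a finite union of images of
orthants under injective linear maps.
-/

open Matrix Function Set
open scoped ENNReal

section Caratheodory

variable {𝕜 κ : Type*} [Field 𝕜] [LinearOrder 𝕜] [IsStrictOrderedRing 𝕜] [Fintype κ]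

/-- The ratio test of the simplex method: `t = min {z j / u j | 0 < u j}`. -/
lemma exists_sub_smul_nonneg_and_eq_zero {z u : κ → 𝕜} (hz : 0 ≤ z) (hu : ∃ j, 0 < u j) :
    ∃ t : 𝕜, 0 ≤ z - t • u ∧ ∃ j, 0 < u j ∧ (z - t • u) j = 0 := by
  classical
  obtain ⟨j₀, hj₀, hmin⟩ := Finset.exists_min_image {j | 0 < u j} (fun j => z j / u j)
    (by simpa [Finset.Nonempty] using hu)
  rw [Finset.mem_filter_univ] at hj₀
  have ht : 0 ≤ z j₀ / u j₀ := div_nonneg (hz j₀) hj₀.le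
  refine ⟨z j₀ / u j₀, fun j => ?_, j₀, hj₀, by simp [div_mul_cancel₀ _ hj₀.ne']⟩
  simp only [Pi.zero_apply, Pi.sub_apply, Pi.smul_apply, smul_eq_mul, sub_nonneg]
  rcases lt_or_ge 0 (u j) with huj | huj
  · exact (le_div_iff₀ huj).1 (hmin j ((Finset.mem_filter_univ j).2 huj))
  · exact (mul_nonpos_of_nonneg_of_nonpos ht huj).trans (hz j)

theorem LinearMap.exists_nonneg_map_eq_and_ker_trivial_on_support {E : Type*} [AddCommGroup E]
    [Module 𝕜 E] (L : (κ → 𝕜) →ₗ[𝕜] E) {z : κ → 𝕜} (hz : 0 ≤ z) :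
    ∃ z', 0 ≤ z' ∧ L z' = L z ∧ ∀ u, support u ⊆ support z' → L u = 0 → u = 0 := by
  induction hS : support z using WellFoundedLT.induction generalizing z with
  | _ S ih =>
  by_cases hker : ∀ u, support u ⊆ support z → L u = 0 → u = 0
  · exact ⟨z, hz, rfl, hker⟩
  push Not at hker
  obtain ⟨u, hu, hLu, hu0⟩ := hker
  obtain ⟨j, hj⟩ : ∃ j, u j ≠ 0 := by simpa [funext_iff] using hu0
  obtain ⟨u, hu, hLu, hpos⟩ : ∃ u, support u ⊆ support z ∧ L u = 0 ∧ ∃ j, 0 < u j := by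
    rcases hj.lt_or_gt with hj | hj
    · exact ⟨-u, by simpa using hu, by simp [hLu], j, by simpa using hj⟩
    · exact ⟨u, hu, hLu, j, hj⟩
  obtain ⟨t, ht, j, hj, hzj⟩ := exists_sub_smul_nonneg_and_eq_zero hz hpos
  have hlt : support (z - t • u) < S := by
    rw [← hS, ssubset_iff_of_subset]
    · exact ⟨j, hu (ne_of_gt hj), fun h => h hzj⟩
    · intro l hl
      by_contra hzl
      exact hl (by simp [notMem_support.1 hzl, notMem_support.1 (mt (@hu l) hzl)])
  obtain ⟨z', hz', hLz', hker'⟩ := ih _ hlt ht rfl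
  exact ⟨z', hz', by simp [hLz', hLu], hker'⟩

end Caratheodory

section Closedness

variable {E : Type*} [AddCommGroup E] [Module ℝ E] [TopologicalSpace E] [IsTopologicalAddGroup E]
  [ContinuousSMul ℝ E] [T2Space E]

lemma LinearMap.isClosed_image_of_ker_trivial_on {F : Type*} [NormedAddCommGroup F]
    [NormedSpace ℝ F] [FiniteDimensional ℝ F] (L : F →ₗ[ℝ] E) {V : Submodule ℝ F}
    (hV : ∀ u ∈ V, L u = 0 → u = 0) {C : Set F} (hC : IsClosed C) (hCV : C ⊆ V) :
    IsClosed (L '' C) := by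
  have hker : LinearMap.ker (L.domRestrict V) = ⊥ :=
    LinearMap.ker_eq_bot'.2 fun u hu => Subtype.ext (hV u u.2 hu)
  have himage : L '' C = L.domRestrict V '' (Subtype.val ⁻¹' C) := by
    change L '' C = (L ∘ Subtype.val) '' _
    rw [image_comp]
    congr 1
    exact (inter_eq_right.2 hCV).symm.trans (Subtype.image_preimage_coe (V : Set F) C).symm
  rw [himage]
  exact (LinearMap.isClosedEmbedding_of_injective hker).isClosedMap _
    (hC.preimage continuous_subtype_val)

lemma Submodule.mem_pi_compl_bot_iff {R κ : Type*} [Semiring R] {S : Set κ} {u : κ → R} :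
    u ∈ (Submodule.pi Sᶜ fun _ => ⊥ : Submodule R (κ → R)) ↔ support u ⊆ S := by
  rw [support_subset_iff']
  simp [Submodule.mem_pi]

theorem LinearMap.isClosed_image_nonneg {κ : Type*} [Fintype κ] (L : (κ → ℝ) →ₗ[ℝ] E) :
    IsClosed (L '' {z | 0 ≤ z}) := by
  let V : Set κ → Submodule ℝ (κ → ℝ) := fun S => Submodule.pi Sᶜ fun _ => ⊥
  have hunion : L '' {z | 0 ≤ z} = ⋃ S ∈ {S | ∀ u, support u ⊆ S → L u = 0 → u = 0},
      L '' ({z | 0 ≤ z} ∩ V S) := by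
    refine Subset.antisymm ?_ (iUnion₂_subset fun S _ => image_mono inter_subset_left)
    rintro _ ⟨z, hz, rfl⟩
    obtain ⟨z', hz', hLz', hker⟩ := L.exists_nonneg_map_eq_and_ker_trivial_on_support hz
    exact mem_biUnion hker ⟨z', ⟨hz', Submodule.mem_pi_compl_bot_iff.2 subset_rfl⟩, hLz'⟩
  rw [hunion]
  refine (toFinite _).isClosed_biUnion fun S hS => ?_
  exact L.isClosed_image_of_ker_trivial_on
    (fun u hu => hS u (Submodule.mem_pi_compl_bot_iff.1 hu))
    (isClosed_Ici.inter (V S).closed_of_finiteDimensional) inter_subset_right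

end Closedness

theorem Matrix.exists_nonneg_mulVec_eq_or {ι κ : Type*} [Fintype ι] [Fintype κ]
    (A : Matrix ι κ ℝ) (b : ι → ℝ) :
    (∃ x, 0 ≤ x ∧ A *ᵥ x = b) ∨ ∃ y, 0 ≤ y ᵥ* A ∧ b ⬝ᵥ y < 0 := by
  classical
  by_cases hb : b ∈ A.mulVecLin '' {x | 0 ≤ x}
  · obtain ⟨x, hx, rfl⟩ := hb
    exact .inl ⟨x, hx, rfl⟩
  let C : ProperCone ℝ (ι → ℝ) :=
    ⟨(PointedCone.positive ℝ (κ → ℝ)).map A.mulVecLin, A.mulVecLin.isClosed_image_nonneg⟩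
  obtain ⟨f, hf, hfb⟩ := C.hyperplane_separation_point hb
  let y : ι → ℝ := fun i => f (Pi.single i 1)
  have hfy : ∀ x, f x = x ⬝ᵥ y := by
    intro x
    conv_lhs => rw [← Finset.univ_sum_single x]
    rw [map_sum]
    refine Finset.sum_congr rfl fun i _ => ?_
    rw [← smul_eq_mul, ← map_smul, ← Pi.single_smul', smul_eq_mul, mul_one]
  refine .inr ⟨y, fun j => ?_, by rwa [← hfy]⟩
  have := hf (A *ᵥ Pi.single j 1) ⟨Pi.single j 1, Pi.single_nonneg.2 zero_le_one, rfl⟩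
  rwa [hfy, dotProduct_comm, dotProduct_mulVec, dotProduct_single, mul_one] at this

theorem Matrix.exists_nonneg_mulVec_le_or {ι κ : Type*} [Fintype ι] [Fintype κ] [DecidableEq ι]
    (A : Matrix ι κ ℝ) (b : ι → ℝ) :
    (∃ x, 0 ≤ x ∧ A *ᵥ x ≤ b) ∨ ∃ y, 0 ≤ y ∧ 0 ≤ y ᵥ* A ∧ b ⬝ᵥ y < 0 := by
  rcases (A.fromCols (1 : Matrix ι ι ℝ)).exists_nonneg_mulVec_eq_or b with
    ⟨x, hx, hAx⟩ | ⟨y, hyA, hby⟩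
  · refine .inl ⟨x ∘ Sum.inl, fun j => hx _, ?_⟩
    rw [← hAx, fromCols_mulVec, one_mulVec]
    exact le_add_of_nonneg_right fun j => hx _
  · rw [vecMul_fromCols, vecMul_one, ← Sum.elim_zero_zero, Sum.elim_le_elim_iff] at hyA
    exact .inr ⟨y, hyA.2, hyA.1, hby⟩

lemma ENNReal.inv_toReal_mul_add_nonneg {μ : ℝ≥0∞} (hμ : 0 < μ) {P E : ℝ} (hE : E < 0)
    (hle : μ ≤ ENNReal.ofReal (P / -E)) : 0 ≤ μ⁻¹.toReal * P + E := by
  have hμ_top : μ ≠ ⊤ := ne_top_of_le_ne_top ofReal_ne_top hle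
  have hμr : 0 < μ.toReal := toReal_pos hμ.ne' hμ_top
  have hPE : 0 < P / -E := ofReal_pos.1 (hμ.trans_le hle)
  have hμP : μ.toReal * -E ≤ P :=
    (le_div_iff₀ (neg_pos.2 hE)).1 (toReal_le_of_le_ofReal hPE.le hle)
  rw [toReal_inv, inv_mul_eq_div, ← sub_neg_eq_add, sub_nonneg, le_div_iff₀ hμr]
  linarith

section LinearProgram

variable {ι m : Type*} [Fintype ι]

/-- The value `μ*_i` of the paper, for `c = D_i` and `a = q_i`. -/
noncomputable def lpValue (c q : ι → ℝ) (a β : ℝ) (F : Matrix m ι ℝ) (w : m → ℝ) : ℝ≥0∞ :=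
  sInf {r : ℝ≥0∞ | ∃ y : ι → ℝ, ∃ y₀ : ℝ, c ⬝ᵥ y + a * y₀ = -1 ∧
    (∀ j, (F *ᵥ y) j ≤ y₀ * w j) ∧ 0 ≤ y ∧ 0 ≤ y₀ ∧ r = ENNReal.ofReal (q ⬝ᵥ y + β * y₀)}

lemma lpValue_le_ofReal_div {c q : ι → ℝ} {a β : ℝ} {F : Matrix m ι ℝ} {w : m → ℝ}
    {y : ι → ℝ} {y₀ : ℝ} (hy : 0 ≤ y) (hy₀ : 0 ≤ y₀) (hFy : ∀ j, (F *ᵥ y) j ≤ y₀ * w j)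
    (hneg : c ⬝ᵥ y + a * y₀ < 0) :
    lpValue c q a β F w ≤ ENNReal.ofReal ((q ⬝ᵥ y + β * y₀) / -(c ⬝ᵥ y + a * y₀)) := by
  have hθ : 0 < (-(c ⬝ᵥ y + a * y₀))⁻¹ := inv_pos.2 (neg_pos.2 hneg)
  refine sInf_le ⟨(-(c ⬝ᵥ y + a * y₀))⁻¹ • y, (-(c ⬝ᵥ y + a * y₀))⁻¹ * y₀, ?_, fun j => ?_,
    smul_nonneg hθ.le hy, mul_nonneg hθ.le hy₀, ?_⟩
  · rw [dotProduct_smul, smul_eq_mul]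
    field_simp [hneg.ne]
    ring
  · rw [mulVec_smul, Pi.smul_apply, smul_eq_mul, mul_assoc]
    exact mul_le_mul_of_nonneg_left (hFy j) hθ.le
  · rw [dotProduct_smul, smul_eq_mul, div_eq_inv_mul]
    ring_nf

lemma inv_toReal_lpValue_mul_add_nonneg {c q : ι → ℝ} {a β : ℝ} {F : Matrix m ι ℝ}
    {w : m → ℝ} (hq : 0 ≤ q) (hβ : 0 ≤ β) (hpos : 0 < lpValue c q a β F w) {y : ι → ℝ} {y₀ : ℝ}
    (hy : 0 ≤ y) (hy₀ : 0 ≤ y₀) (hFy : ∀ j, (F *ᵥ y) j ≤ y₀ * w j) :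
    0 ≤ (lpValue c q a β F w)⁻¹.toReal * (q ⬝ᵥ y + β * y₀) + (c ⬝ᵥ y + a * y₀) := by
  rcases le_or_gt 0 (c ⬝ᵥ y + a * y₀) with hE | hE
  · have hP : 0 ≤ q ⬝ᵥ y + β * y₀ :=
      add_nonneg (dotProduct_nonneg_of_nonneg hq hy) (mul_nonneg hβ hy₀)
    exact add_nonneg (mul_nonneg ENNReal.toReal_nonneg hP) hE
  · exact ENNReal.inv_toReal_mul_add_nonneg hpos hE (lpValue_le_ofReal_div hy hy₀ hFy hE)

end LinearProgram

theorem dual_certificate_of_pos_LP_value_general {n M : ℕ}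
    (D : Matrix (Fin n) (Fin n) ℝ)
    (q : Fin n → ℝ) (hq : 0 ≤ q)
    (β : ℝ) (hβ : 0 ≤ β)
    (F : Matrix (Fin M) (Fin n) ℝ) (w : Fin M → ℝ)
    (i : Fin n)
    (mustar : ℝ≥0∞)
    (hmu : mustar = sInf {r : ℝ≥0∞ | ∃ y : Fin n → ℝ, ∃ y₀ : ℝ,
      (fun j => D j i) ⬝ᵥ y + q i * y₀ = -1 ∧
      (∀ j, (F *ᵥ y) j ≤ y₀ * w j) ∧ 0 ≤ y ∧ 0 ≤ y₀ ∧
      r = ENNReal.ofReal (q ⬝ᵥ y + β * y₀)})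
    (hpos : 0 < mustar) :
    ∃ v : Fin M → ℝ, ∃ s : Fin n → ℝ, 0 ≤ v ∧ 0 ≤ s ∧
      (mustar⁻¹).toReal • q + (fun j => D j i) + Fᵀ *ᵥ v - s = 0 ∧
      0 ≤ (mustar⁻¹).toReal * β + q i - w ⬝ᵥ v := by
  set c : Fin n → ℝ := fun j => D j i
  replace hmu : mustar = lpValue c q (q i) β F w := hmu
  subst hmu
  set ρ := (lpValue c q (q i) β F w)⁻¹.toReal
  -- the certificate is `v` with `-Fᵀ v ≤ ρ q + c` and `wᵀ v ≤ ρ β + q_i`, and `s` is the slack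
  rcases (fromRows (-Fᵀ) (replicateRow Unit w)).exists_nonneg_mulVec_le_or
      ((ρ • q + c) ⊕ᵥ fun _ => ρ * β + q i) with ⟨v, hv, hAv⟩ | ⟨y, hy, hyA, hby⟩
  · rw [fromRows_mulVec, Sum.elim_le_elim_iff, replicateRow_mulVec_eq_const, neg_mulVec,
      neg_le_iff_add_nonneg] at hAv
    exact ⟨v, ρ • q + c + Fᵀ *ᵥ v, hv, hAv.1, sub_self _, sub_nonneg.2 (hAv.2 ())⟩
  · obtain ⟨Y, y₀, rfl⟩ : ∃ Y y₀, y = Y ⊕ᵥ fun _ => y₀ :=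
      ⟨y ∘ Sum.inl, y (Sum.inr ()), by ext (j | _) <;> rfl⟩
    have hrow : (fun _ => y₀) ᵥ* replicateRow Unit w = y₀ • w := by
      ext j
      simp [vecMul, dotProduct, replicateRow_apply]
    rw [vecMul_fromRows, Sum.elim_comp_inl, Sum.elim_comp_inr, vecMul_neg, vecMul_transpose,
      hrow] at hyA
    have hFY : ∀ j, (F *ᵥ Y) j ≤ y₀ * w j := fun j => by simpa using hyA j
    have hval : ρ * (q ⬝ᵥ Y + β * y₀) + (c ⬝ᵥ Y + q i * y₀) < 0 := by
      have hunit : (fun _ : Unit => ρ * β + q i) ⬝ᵥ (fun _ => y₀) = (ρ * β + q i) * y₀ := by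
        simp [dotProduct]
      rw [sumElim_dotProduct_sumElim, add_dotProduct, smul_dotProduct, smul_eq_mul, hunit] at hby
      linarith
    exact (hval.not_ge (inv_toReal_lpValue_mul_add_nonneg hq hβ hpos (fun j => hy (Sum.inl j))
      (hy (Sum.inr ())) hFY)).elim

/-- Lemma `l:lambdaistar`. Let `μ*_i ∈ [0, +∞]` be the optimal
value of the linear program
`inf { qᵀy + βy₀ : D_iᵀy + q_i y₀ = −1, Fy ≤ y₀w, y ≥ 0, y₀ ≥ 0 }`
(`+∞` when infeasible). If `μ*_i > 0`, then there are `v ≥ 0`, `s ≥ 0` with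
`(μ*_i)⁻¹ q + D_i + Fᵀv − s = 0` and `(μ*_i)⁻¹ β + q_i − wᵀv ≥ 0`, where
`(+∞)⁻¹ = 0`. -/
theorem dual_certificate_of_pos_LP_value {n M k : ℕ} (hkn : k ≤ n)
    (D : Matrix (Fin n) (Fin n) ℝ) (hD : D.IsSymm)
    (hDz : ∀ i j : Fin n, k ≤ (i : ℕ) ∨ k ≤ (j : ℕ) → D i j = 0)
    (q : Fin n → ℝ) (hq : 0 ≤ q) (hqz : ∀ i : Fin n, k ≤ (i : ℕ) → q i = 0)
    (β : ℝ) (hβ : 0 ≤ β)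
    (F : Matrix (Fin M) (Fin n) ℝ) (w : Fin M → ℝ)
    (i : Fin n) (hi : (i : ℕ) < k)
    (mustar : ℝ≥0∞)
    (hmu : mustar = sInf {r : ℝ≥0∞ | ∃ y : Fin n → ℝ, ∃ y₀ : ℝ,
      (fun j => D j i) ⬝ᵥ y + q i * y₀ = -1 ∧
      (∀ j, (F *ᵥ y) j ≤ y₀ * w j) ∧ 0 ≤ y ∧ 0 ≤ y₀ ∧
      r = ENNReal.ofReal (q ⬝ᵥ y + β * y₀)})
    (hpos : 0 < mustar) :
    ∃ v : Fin M → ℝ, ∃ s : Fin n → ℝ, 0 ≤ v ∧ 0 ≤ s ∧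
      (mustar⁻¹).toReal • q + (fun j => D j i) + Fᵀ *ᵥ v - s = 0 ∧
      0 ≤ (mustar⁻¹).toReal * β + q i - w ⬝ᵥ v :=
  dual_certificate_of_pos_LP_value_general D q hq β hβ F w i mustar hmu hpos
end

section
/- Let k ≤ n, let D be a symmetric n×n real matrix with D_{ij} = 0 whenever i > k or j > k, let q ∈ ℝⁿ with q ≥ 0 and q_i = 0 for i > k, let β ≥ 0, F ∈ ℝ^{M×n}, w ∈ ℝ^M, and let ȳ ∈ ℝⁿ satisfy ȳ_i = 0 for all i ∈ {1,…,k}. For i ∈ {1,…,k} define μ*_i := inf{ qᵀy + β y₀ : D_iᵀ y + q_i y₀ = −1, F y ≤ y₀ w, y ≥ 0, y₀ ≥ 0 } ∈ [0, +∞] (D_i the i-th column of D), and assume μ*_i > 0 for every i ∈ {1,…,k}. Define θ ∈ ℝⁿ by θ_i = (μ*_i)^{-1} for i ≤ k (with (+∞)^{-1} = 0) and θ_i = 0 for i > k. Then for every y ∈ ℝⁿ with y ≥ 0, F y ≤ w, and θᵀ(y − ȳ) ≤ 1, one has yᵀ D y + 2 qᵀ y + β ≥ 0. -/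
/-!
Put `s := qᵀy + β ≥ 0`. If `(Dy)ᵢ + qᵢ = -c < 0` for some `i < k`, then `(y / c, 1 / c)` is
feasible for the `i`-th cut LP, so `μ*ᵢ ≤ s / c`, i.e. `(Dy)ᵢ + qᵢ ≥ -θᵢ s`; for `i ≥ k` both
sides vanish. Weighting these coordinate bounds by `yᵢ ≥ 0` and using `θᵀy = θᵀ(y - ȳ) ≤ 1`
gives `yᵀDy + qᵀy ≥ -(θᵀy) s ≥ -s`.
-/

open Matrix
open scoped ENNReal

section CutLP

variable {ι κ : Type*} [Fintype ι]

noncomputable def cutLPValue (a : ι → ℝ) (a₀ : ℝ) (q : ι → ℝ) (β : ℝ) (F : Matrix κ ι ℝ)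
    (w : κ → ℝ) : ℝ≥0∞ :=
  sInf {r : ℝ≥0∞ | ∃ z : ι → ℝ, ∃ z₀ : ℝ, a ⬝ᵥ z + a₀ * z₀ = -1 ∧
    (∀ j, (F *ᵥ z) j ≤ z₀ * w j) ∧ 0 ≤ z ∧ 0 ≤ z₀ ∧ r = ENNReal.ofReal (q ⬝ᵥ z + β * z₀)}

theorem cutLPValue_le_ofReal_div {a : ι → ℝ} {a₀ : ℝ} {q : ι → ℝ} {β : ℝ}
    {F : Matrix κ ι ℝ} {w : κ → ℝ} {y : ι → ℝ} (hy : 0 ≤ y) (hFy : F *ᵥ y ≤ w)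
    {c : ℝ} (hc : 0 < c) (hac : a ⬝ᵥ y + a₀ = -c) :
    cutLPValue a a₀ q β F w ≤ ENNReal.ofReal ((q ⬝ᵥ y + β) / c) := by
  have hc' : 0 ≤ c⁻¹ := inv_nonneg.2 hc.le
  refine sInf_le ⟨c⁻¹ • y, c⁻¹, ?_, fun j => ?_, smul_nonneg hc' hy, hc', ?_⟩
  · rw [dotProduct_smul, smul_eq_mul, mul_comm a₀, ← mul_add, hac]
    field_simp
  · rw [mulVec_smul, Pi.smul_apply, smul_eq_mul]
    exact mul_le_mul_of_nonneg_left (hFy j) hc'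
  · rw [dotProduct_smul, smul_eq_mul, div_eq_inv_mul, mul_add, mul_comm β]

theorem neg_toReal_inv_mul_le_of_cutLPValue {a : ι → ℝ} {a₀ : ℝ} {q : ι → ℝ} {β : ℝ}
    {F : Matrix κ ι ℝ} {w : κ → ℝ} (hpos : 0 < cutLPValue a a₀ q β F w)
    {y : ι → ℝ} (hy : 0 ≤ y) (hFy : F *ᵥ y ≤ w) (hs : 0 ≤ q ⬝ᵥ y + β) :
    -((cutLPValue a a₀ q β F w)⁻¹.toReal * (q ⬝ᵥ y + β)) ≤ a ⬝ᵥ y + a₀ := by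
  set μ := cutLPValue a a₀ q β F w
  set s := q ⬝ᵥ y + β
  by_contra! hneg
  obtain ⟨c, hc, hac⟩ : ∃ c, 0 < c ∧ a ⬝ᵥ y + a₀ = -c :=
    ⟨-(a ⬝ᵥ y + a₀), by nlinarith [ENNReal.toReal_nonneg (a := μ⁻¹)], by ring⟩
  have hμ := cutLPValue_le_ofReal_div (q := q) (β := β) hy hFy hc hac
  have hμtop : μ ≠ ⊤ := ne_top_of_le_ne_top ENNReal.ofReal_ne_top hμ
  have hμreal : 0 < μ.toReal := ENNReal.toReal_pos hpos.ne' hμtop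
  have hμs : μ.toReal ≤ s / c :=
    (ENNReal.le_ofReal_iff_toReal_le hμtop (div_nonneg hs hc.le)).1 hμ
  have hcs : c ≤ μ.toReal⁻¹ * s := by
    rwa [le_inv_mul_iff₀ hμreal, ← le_div_iff₀ hc]
  rw [ENNReal.toReal_inv, hac] at hneg
  linarith

end CutLP

theorem neg_le_dotProduct_of_le {ι : Type*} [Fintype ι] {y g θ : ι → ℝ} {s : ℝ}
    (hy : 0 ≤ y) (hs : 0 ≤ s) (hθy : θ ⬝ᵥ y ≤ 1) (hg : ∀ i, -(θ i * s) ≤ g i) :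
    -s ≤ y ⬝ᵥ g := by
  have hsum : y ⬝ᵥ (-s • θ) ≤ y ⬝ᵥ g :=
    dotProduct_le_dotProduct_of_nonneg_left (fun i => by simpa [mul_comm] using hg i) hy
  rw [dotProduct_smul, dotProduct_comm, smul_eq_mul] at hsum
  nlinarith

theorem konno_cut_valid_general {n M k : ℕ}
    (D : Matrix (Fin n) (Fin n) ℝ) (hD : D.IsSymm)
    (hDz : ∀ i j : Fin n, k ≤ (i : ℕ) ∨ k ≤ (j : ℕ) → D i j = 0)
    (q : Fin n → ℝ) (hq : 0 ≤ q) (hqz : ∀ i : Fin n, k ≤ (i : ℕ) → q i = 0)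
    (β : ℝ) (hβ : 0 ≤ β)
    (F : Matrix (Fin M) (Fin n) ℝ) (w : Fin M → ℝ)
    (ybar : Fin n → ℝ) (hybar : ∀ i : Fin n, (i : ℕ) < k → ybar i = 0)
    (mustar : Fin n → ℝ≥0∞)
    (hmu : ∀ i : Fin n, mustar i = sInf {r : ℝ≥0∞ | ∃ y : Fin n → ℝ, ∃ y₀ : ℝ,
      (fun j => D j i) ⬝ᵥ y + q i * y₀ = -1 ∧
      (∀ j, (F *ᵥ y) j ≤ y₀ * w j) ∧ 0 ≤ y ∧ 0 ≤ y₀ ∧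
      r = ENNReal.ofReal (q ⬝ᵥ y + β * y₀)})
    (hpos : ∀ i : Fin n, (i : ℕ) < k → 0 < mustar i)
    (θ : Fin n → ℝ)
    (hθ : ∀ i : Fin n, θ i = if (i : ℕ) < k then ((mustar i)⁻¹).toReal else 0) :
    ∀ y : Fin n → ℝ, 0 ≤ y → F *ᵥ y ≤ w → θ ⬝ᵥ (y - ybar) ≤ 1 →
      0 ≤ y ⬝ᵥ (D *ᵥ y) + 2 * (q ⬝ᵥ y) + β := by
  intro y hy hFy hcut
  have hs : 0 ≤ q ⬝ᵥ y + β := add_nonneg (dotProduct_nonneg_of_nonneg hq hy) hβ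
  have hθy : θ ⬝ᵥ y ≤ 1 := by
    have hθybar : θ ⬝ᵥ ybar = 0 := Finset.sum_eq_zero fun i _ => by
      by_cases hik : (i : ℕ) < k
      · rw [hybar i hik, mul_zero]
      · rw [hθ i, if_neg hik, zero_mul]
    rwa [dotProduct_sub, hθybar, sub_zero] at hcut
  have hcoord : ∀ i, -(θ i * (q ⬝ᵥ y + β)) ≤ (D *ᵥ y + q) i := by
    intro i
    by_cases hik : (i : ℕ) < k
    · have hcol : (fun j => D j i) ⬝ᵥ y = (D *ᵥ y) i := by
        simp only [mulVec, hD.apply]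
      have hμi : mustar i = cutLPValue (fun j => D j i) (q i) q β F w := hmu i
      rw [hθ i, if_pos hik, Pi.add_apply, ← hcol, hμi]
      exact neg_toReal_inv_mul_le_of_cutLPValue (hμi ▸ hpos i hik) hy hFy hs
    · have hki : k ≤ (i : ℕ) := not_lt.1 hik
      have hrow : D i = 0 := funext fun j => hDz i j (Or.inl hki)
      have hDy : (D *ᵥ y) i = 0 := by
        change D i ⬝ᵥ y = 0
        rw [hrow, zero_dotProduct]
      rw [hθ i, if_neg hik, Pi.add_apply, hDy, hqz i hki]
      simp
  have := neg_le_dotProduct_of_le hy hs hθy hcoord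
  rw [dotProduct_add, dotProduct_comm y q] at this
  linarith

/-- Proposition `prop:Konno`, validity of the Konno-type cut in
transformed coordinates. Suppose `μ*_i > 0` for all `i ≤ k`, and let
`θ_i = (μ*_i)⁻¹` for `i ≤ k` (`(+∞)⁻¹ = 0`) and `θ_i = 0` for `i > k`. Then the
quadratic `yᵀDy + 2qᵀy + β` is nonnegative over the region
`{y ≥ 0, Fy ≤ w, θᵀ(y − ȳ) ≤ 1}`. -/
theorem konno_cut_valid {n M k : ℕ} (hkn : k ≤ n)
    (D : Matrix (Fin n) (Fin n) ℝ) (hD : D.IsSymm)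
    (hDz : ∀ i j : Fin n, k ≤ (i : ℕ) ∨ k ≤ (j : ℕ) → D i j = 0)
    (q : Fin n → ℝ) (hq : 0 ≤ q) (hqz : ∀ i : Fin n, k ≤ (i : ℕ) → q i = 0)
    (β : ℝ) (hβ : 0 ≤ β)
    (F : Matrix (Fin M) (Fin n) ℝ) (w : Fin M → ℝ)
    (ybar : Fin n → ℝ) (hybar : ∀ i : Fin n, (i : ℕ) < k → ybar i = 0)
    (mustar : Fin n → ℝ≥0∞)
    (hmu : ∀ i : Fin n, mustar i = sInf {r : ℝ≥0∞ | ∃ y : Fin n → ℝ, ∃ y₀ : ℝ,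
      (fun j => D j i) ⬝ᵥ y + q i * y₀ = -1 ∧
      (∀ j, (F *ᵥ y) j ≤ y₀ * w j) ∧ 0 ≤ y ∧ 0 ≤ y₀ ∧
      r = ENNReal.ofReal (q ⬝ᵥ y + β * y₀)})
    (hpos : ∀ i : Fin n, (i : ℕ) < k → 0 < mustar i)
    (θ : Fin n → ℝ)
    (hθ : ∀ i : Fin n, θ i = if (i : ℕ) < k then ((mustar i)⁻¹).toReal else 0) :
    ∀ y : Fin n → ℝ, 0 ≤ y → F *ᵥ y ≤ w → θ ⬝ᵥ (y - ybar) ≤ 1 →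
      0 ≤ y ⬝ᵥ (D *ᵥ y) + 2 * (q ⬝ᵥ y) + β :=
  konno_cut_valid_general D hD hDz q hq hqz β hβ F w ybar hybar mustar hmu hpos θ hθ
end

section
/- Let k ≤ n, let D be a symmetric n×n real matrix with D_{ij} = 0 whenever i > k or j > k, let q ∈ ℝⁿ with q ≥ 0 and q_i = 0 for i > k, let β ≥ 0, F ∈ ℝ^{M×n}, w ∈ ℝ^M. For i ∈ {1,…,k} define μ*_i := inf{ qᵀy + β y₀ : D_iᵀ y + q_i y₀ = −1, F y ≤ y₀ w, y ≥ 0, y₀ ≥ 0 } ∈ [0, +∞], and assume μ*_i > 0 for every i ∈ {1,…,k}. Define θ ∈ ℝⁿ by θ_i = (μ*_i)^{-1} for i ≤ k (with (+∞)^{-1} = 0) and θ_i = 0 for i > k. Then there exist entrywise nonnegative Λ ∈ ℝ^{M×n}, L ∈ ℝ^{n×n} and ℓ ∈ ℝⁿ, ℓ ≥ 0, such that [D, q; qᵀ, β] = ½ Gᵀ [L + Lᵀ, Λᵀ, ℓ; Λ, 0, 0; ℓᵀ, 0ᵀ, 0] G + ½ (q; β)(−θᵀ, 1) + ½ (−θ;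 1)(qᵀ, β), where G := [Iₙ, 0; −F, w; 0ᵀ, 1] ∈ ℝ^{(n+M+1)×(n+1)}. -/
open Matrix
open scoped ENNReal

/-- The `(n+M+1) × (n+1)` block matrix `G = [Iₙ, 0; −F, w; 0ᵀ, 1]`. -/
noncomputable def Gmat {n M : ℕ} (F : Matrix (Fin M) (Fin n) ℝ) (w : Fin M → ℝ) :
    Matrix ((Fin n ⊕ Fin M) ⊕ Unit) (Fin n ⊕ Unit) ℝ :=
  Matrix.of fun i j =>
    match i, j with
    | Sum.inl (Sum.inl i), Sum.inl j => if i = j then 1 else 0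
    | Sum.inl (Sum.inl _), Sum.inr _ => 0
    | Sum.inl (Sum.inr i), Sum.inl j => -F i j
    | Sum.inl (Sum.inr i), Sum.inr _ => w i
    | Sum.inr _, Sum.inl _ => 0
    | Sum.inr _, Sum.inr _ => 1

/-- The `(n+M+1) × (n+M+1)` block matrix `[L+Lᵀ, Λᵀ, ℓ; Λ, 0, 0; ℓᵀ, 0ᵀ, 0]`. -/
noncomputable def midMat {n M : ℕ} (L : Matrix (Fin n) (Fin n) ℝ)
    (Λ : Matrix (Fin M) (Fin n) ℝ) (ℓ : Fin n → ℝ) :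
    Matrix ((Fin n ⊕ Fin M) ⊕ Unit) ((Fin n ⊕ Fin M) ⊕ Unit) ℝ :=
  Matrix.of fun i j =>
    match i, j with
    | Sum.inl (Sum.inl i), Sum.inl (Sum.inl j) => L i j + L j i
    | Sum.inl (Sum.inl i), Sum.inl (Sum.inr j) => Λ j i
    | Sum.inl (Sum.inl i), Sum.inr _ => ℓ i
    | Sum.inl (Sum.inr i), Sum.inl (Sum.inl j) => Λ i j
    | Sum.inl (Sum.inr _), Sum.inl (Sum.inr _) => 0
    | Sum.inl (Sum.inr _), Sum.inr _ => 0
    | Sum.inr _, Sum.inl (Sum.inl j) => ℓ j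
    | Sum.inr _, Sum.inl (Sum.inr _) => 0
    | Sum.inr _, Sum.inr _ => 0

/-- The `(n+1) × (n+1)` symmetric matrix `[D, q; qᵀ, β]`. -/
noncomputable def DQmat {n : ℕ} (D : Matrix (Fin n) (Fin n) ℝ) (q : Fin n → ℝ)
    (β : ℝ) : Matrix (Fin n ⊕ Unit) (Fin n ⊕ Unit) ℝ :=
  Matrix.of fun i j =>
    match i, j with
    | Sum.inl i, Sum.inl j => D i j
    | Sum.inl i, Sum.inr _ => q i
    | Sum.inr _, Sum.inl j => q j
    | Sum.inr _, Sum.inr _ => β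


/-!
For `i < k`, the choice `θᵢ = 1 / μ*ᵢ` makes `-(D·ᵢ ⬝ y + qᵢ y₀) ≤ θᵢ (q ⬝ y + β y₀)` valid on the
cone `{y ≥ 0, y₀ ≥ 0, F y ≤ y₀ w}`: a violating point, rescaled so that `D·ᵢ ⬝ y + qᵢ y₀ = -1`, would
be feasible for the LP defining `μ*ᵢ` with value below `μ*ᵢ`. By Farkas' lemma this valid inequality
has a multiplier `λᵢ ≥ 0` with `λᵢ ᵥ* F ≥ -D·ᵢ - θᵢ q` and `w ⬝ λᵢ ≤ qᵢ + β θᵢ` (for `i ≥ k` take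
`λᵢ = 0`). With `Λ = [λ₁ ⋯ λₙ]`, `L = D + q θᵀ + Fᵀ Λ` and `ℓ = q + β θ - Λᵀ w`, these inequalities
say exactly that `L ≥ 0` and `ℓ ≥ 0`, and the matrix identity is a block computation. Farkas' lemma
is obtained by separating a point from a finitely generated cone, which is closed by the conic
Carathéodory theorem.
-/

section FinitelyGeneratedCone

variable {ι E : Type*} [AddCommGroup E] [Module ℝ E]

theorem exists_erase_nonneg_sum_smul_eq [DecidableEq ι] (v : ι → E) {s : Finset ι}
    {c g : ι → ℝ} (hc : ∀ i ∈ s, 0 ≤ c i) (hg : ∑ i ∈ s, g i • v i = 0)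
    (hpos : ∃ i ∈ s, 0 < g i) :
    ∃ i₀ ∈ s, ∃ c' : ι → ℝ, (∀ i ∈ s.erase i₀, 0 ≤ c' i) ∧
      ∑ i ∈ s.erase i₀, c' i • v i = ∑ i ∈ s, c i • v i := by
  obtain ⟨i₀, hi₀, hmin⟩ := (s.filter (0 < g ·)).exists_min_image (fun i => c i / g i)
    (by simpa [Finset.filter_nonempty_iff] using hpos)
  obtain ⟨hi₀s, hgi₀⟩ := Finset.mem_filter.mp hi₀
  -- step along the relation `g` until the first coefficient hits zero
  set τ := c i₀ / g i₀
  have hτ : 0 ≤ τ := div_nonneg (hc i₀ hi₀s) hgi₀.le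
  refine ⟨i₀, hi₀s, fun i => c i - τ * g i, fun i hi => ?_, ?_⟩
  · have his := Finset.mem_of_mem_erase hi
    rcases lt_or_ge 0 (g i) with hgi | hgi
    · have := hmin i (Finset.mem_filter.mpr ⟨his, hgi⟩)
      rw [le_div_iff₀ hgi] at this
      linarith
    · nlinarith [hc i his]
  · have hzero : c i₀ - τ * g i₀ = 0 := by rw [div_mul_cancel₀ _ hgi₀.ne', sub_self]
    rw [Finset.sum_erase _ (by simp only [hzero, zero_smul])]
    simp only [sub_smul, Finset.sum_sub_distrib, mul_smul, ← Finset.smul_sum, hg, smul_zero,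
      sub_zero]

theorem exists_linearIndepOn_nonneg_sum_smul_eq (v : ι → E) (s : Finset ι) (c : ι → ℝ)
    (hc : ∀ i ∈ s, 0 ≤ c i) :
    ∃ t ⊆ s, LinearIndepOn ℝ v (t : Set ι) ∧ ∃ d : ι → ℝ, (∀ i ∈ t, 0 ≤ d i) ∧
      ∑ i ∈ t, d i • v i = ∑ i ∈ s, c i • v i := by
  classical
  induction s using Finset.strongInduction generalizing c with
  | _ s ih =>
  by_cases hli : LinearIndepOn ℝ v (s : Set ι)
  · exact ⟨s, subset_rfl, hli, c, hc, rfl⟩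
  obtain ⟨g, hg, i₁, hi₁, hgi₁⟩ := not_linearIndepOn_finset_iff.mp hli
  obtain ⟨g', hg', hpos⟩ : ∃ g' : ι → ℝ, ∑ i ∈ s, g' i • v i = 0 ∧ ∃ i ∈ s, 0 < g' i := by
    rcases hgi₁.lt_or_gt with hneg | hpos
    · exact ⟨-g, by simp [neg_smul, hg], i₁, hi₁, by simpa using hneg⟩
    · exact ⟨g, hg, i₁, hi₁, hpos⟩
  obtain ⟨i₀, hi₀, c', hc', hsum⟩ := exists_erase_nonneg_sum_smul_eq v hc hg' hpos
  obtain ⟨t, hts, hli, d, hd, hdsum⟩ := ih _ (Finset.erase_ssubset hi₀) c' hc'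
  exact ⟨t, hts.trans (Finset.erase_subset _ _), hli, d, hd, hdsum.trans hsum⟩

theorem LinearMap.pi_apply_eq_sum_smul_single [Fintype ι] [DecidableEq ι] (f : (ι → ℝ) →ₗ[ℝ] E)
    (c : ι → ℝ) : f c = ∑ i, c i • f (Pi.single i 1) := by
  conv_lhs => rw [← Finset.univ_sum_single c]
  simp only [map_sum, ← map_smul, ← Pi.single_smul', smul_eq_mul, mul_one]

theorem LinearMap.isClosed_image_Ici_zero [Fintype ι] [TopologicalSpace E]
    [IsTopologicalAddGroup E] [ContinuousSMul ℝ E] [T2Space E] (f : (ι → ℝ) →ₗ[ℝ] E) :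
    IsClosed (f '' Set.Ici 0) := by
  classical
  set v : ι → E := fun i => f (Pi.single i 1)
  have hf : ∀ c, f c = ∑ i, c i • v i := f.pi_apply_eq_sum_smul_single
  have hunion : f '' Set.Ici 0 = ⋃ t ∈ {t : Finset ι | LinearIndepOn ℝ v (t : Set ι)},
      Fintype.linearCombination ℝ (fun i : t => v i) '' Set.Ici 0 := by
    ext x
    simp only [hf, Set.mem_image, Set.mem_iUnion, Set.mem_Ici, Set.mem_ofPred_eq,
      Fintype.linearCombination_apply, exists_prop]
    constructor
    · rintro ⟨c, hc, rfl⟩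
      obtain ⟨t, -, hli, d, hd, hsum⟩ :=
        exists_linearIndepOn_nonneg_sum_smul_eq v Finset.univ c fun i _ => hc i
      exact ⟨t, hli, fun i => d i, fun i => hd i i.2,
        (t.sum_coe_sort fun i => d i • v i).trans hsum⟩
    · rintro ⟨t, -, d, hd, rfl⟩
      refine ⟨fun i => if h : i ∈ t then d ⟨i, h⟩ else 0, fun i => ?_, ?_⟩
      · dsimp only
        split_ifs
        exacts [hd _, le_rfl]
      · rw [← Finset.sum_subset t.subset_univ fun i _ hi => by simp [hi], ← Finset.sum_coe_sort]
        simp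
  rw [hunion]
  refine (Set.toFinite _).isClosed_biUnion fun t hli => ?_
  have hinj : LinearMap.ker (Fintype.linearCombination ℝ (fun i : t => v i)) = ⊥ :=
    LinearMap.ker_eq_bot.mpr (linearIndependent_iff_injective_fintypeLinearCombination.mp hli)
  exact (LinearMap.isClosedEmbedding_of_injective hinj).isClosedMap _ isClosed_Ici

end FinitelyGeneratedCone

namespace Matrix

variable {κ : Type*} [Fintype ι] [Fintype κ]

theorem farkas (B : Matrix ι κ ℝ) (b : ι → ℝ) :
    (∃ z, 0 ≤ z ∧ B *ᵥ z = b) ∨ ∃ u, u ᵥ* B ≤ 0 ∧ 0 < b ⬝ᵥ u := by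
  classical
  by_cases hb : ∃ z, 0 ≤ z ∧ B *ᵥ z = b
  · exact Or.inl hb
  let C : ProperCone ℝ (ι → ℝ) :=
    { toSubmodule := (PointedCone.positive ℝ (κ → ℝ)).map (B.mulVecLin.restrictScalars _)
      isClosed' := B.mulVecLin.isClosed_image_Ici_zero }
  obtain ⟨g, hgC, hgb⟩ := C.hyperplane_separation_point (x₀ := b) (by simpa [C] using hb)
  set u : ι → ℝ := fun i => -g (Pi.single i 1)
  have hg : ∀ y, g y = -(u ⬝ᵥ y) := fun y => by
    simpa [u, dotProduct, mul_comm] using (g : (ι → ℝ) →ₗ[ℝ] ℝ).pi_apply_eq_sum_smul_single y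
  refine Or.inr ⟨u, fun j => ?_, by rw [dotProduct_comm]; linarith [hg b]⟩
  have := hgC (B *ᵥ Pi.single j 1) ⟨Pi.single j 1, by simp [Pi.single_nonneg], rfl⟩
  rw [hg, dotProduct_mulVec, dotProduct_single, mul_one] at this
  simpa using this

theorem farkas_le (A : Matrix ι κ ℝ) (b : ι → ℝ) :
    (∃ x, 0 ≤ x ∧ b ≤ A *ᵥ x) ∨ ∃ u, 0 ≤ u ∧ u ᵥ* A ≤ 0 ∧ 0 < b ⬝ᵥ u := by
  classical
  rcases farkas (fromCols A (-1 : Matrix ι ι ℝ)) b with ⟨z, hz, rfl⟩ | ⟨u, hu, hbu⟩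
  · refine Or.inl ⟨z ∘ Sum.inl, fun j => hz _, fun i => ?_⟩
    have : 0 ≤ z (Sum.inr i) := hz _
    simp only [fromCols_mulVec, neg_mulVec, one_mulVec, Pi.add_apply, Pi.neg_apply,
      Function.comp_apply]
    linarith
  · simp only [vecMul_fromCols, vecMul_neg, vecMul_one] at hu
    exact Or.inr ⟨u, fun i => by simpa using hu (Sum.inr i), fun j => hu (Sum.inl j), hbu⟩

theorem exists_nonneg_le_vecMul_of_forall (F : Matrix κ ι ℝ) (w : κ → ℝ) (c : ι → ℝ) (d : ℝ)
    (h : ∀ y y₀, 0 ≤ y → 0 ≤ y₀ → F *ᵥ y ≤ y₀ • w → c ⬝ᵥ y ≤ d * y₀) :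
    ∃ l, 0 ≤ l ∧ c ≤ l ᵥ* F ∧ w ⬝ᵥ l ≤ d := by
  rcases farkas_le (fromRows Fᵀ (replicateRow Unit (-w))) (Sum.elim c fun _ => -d) with
    ⟨l, hl, hle⟩ | ⟨u, hu, huA, hbu⟩
  · refine ⟨l, hl, fun i => ?_, ?_⟩
    · simpa [mulVec_transpose] using hle (Sum.inl i)
    · simpa only [Sum.elim_inr, fromRows_mulVec, replicateRow_mulVec_eq_const, neg_dotProduct,
        Function.const_apply, neg_le_neg_iff, dotProduct_comm w] using hle (Sum.inr ())
  · refine absurd (h (u ∘ Sum.inl) (u (Sum.inr ())) (fun i => hu _) (hu _) fun m => ?_) ?_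
    · simpa [vecMul, mulVec, dotProduct, replicateRow, mul_comm] using huA m
    · simpa [dotProduct, Fintype.sum_sum_type] using hbu

end Matrix

section KonnoSubproblem

variable {ι κ : Type*} [Fintype ι]

/-- `konnoValue (fun j => D j i) (q i) F w q β` is the value `μ*ᵢ` of the `i`-th Konno LP. -/
noncomputable def konnoValue (a : ι → ℝ) (a₀ : ℝ) (F : Matrix κ ι ℝ) (w : κ → ℝ) (q : ι → ℝ)
    (β : ℝ) : ℝ≥0∞ :=
  sInf {r : ℝ≥0∞ | ∃ y : ι → ℝ, ∃ y₀ : ℝ,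
      a ⬝ᵥ y + a₀ * y₀ = -1 ∧
      (∀ j, (F *ᵥ y) j ≤ y₀ * w j) ∧ 0 ≤ y ∧ 0 ≤ y₀ ∧
      r = ENNReal.ofReal (q ⬝ᵥ y + β * y₀)}

variable {a : ι → ℝ} {a₀ : ℝ} {F : Matrix κ ι ℝ} {w : κ → ℝ} {q : ι → ℝ} {β : ℝ}
  {y : ι → ℝ} {y₀ : ℝ}

theorem konnoValue_le_of_neg (hy : 0 ≤ y) (hy₀ : 0 ≤ y₀) (hFy : F *ᵥ y ≤ y₀ • w)
    (ht : a ⬝ᵥ y + a₀ * y₀ < 0) :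
    konnoValue a a₀ F w q β ≤
      ENNReal.ofReal ((q ⬝ᵥ y + β * y₀) / -(a ⬝ᵥ y + a₀ * y₀)) := by
  set t := -(a ⬝ᵥ y + a₀ * y₀)
  have ht' : 0 < t := neg_pos.mpr ht
  refine sInf_le ⟨t⁻¹ • y, t⁻¹ * y₀, ?_, fun j => ?_, smul_nonneg (inv_nonneg.mpr ht'.le) hy,
    mul_nonneg (inv_nonneg.mpr ht'.le) hy₀, ?_⟩
  · rw [dotProduct_smul, smul_eq_mul]
    field_simp
    linarith
  · rw [mulVec_smul, Pi.smul_apply, smul_eq_mul, mul_assoc]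
    exact mul_le_mul_of_nonneg_left (hFy j) (inv_nonneg.mpr ht'.le)
  · rw [dotProduct_smul, smul_eq_mul, div_eq_inv_mul]
    ring_nf

theorem neg_le_konnoValue_inv_mul (hq : 0 ≤ q) (hβ : 0 ≤ β)
    (hpos : 0 < konnoValue a a₀ F w q β) (hy : 0 ≤ y) (hy₀ : 0 ≤ y₀) (hFy : F *ᵥ y ≤ y₀ • w) :
    -(a ⬝ᵥ y + a₀ * y₀) ≤ (konnoValue a a₀ F w q β)⁻¹.toReal * (q ⬝ᵥ y + β * y₀) := by
  set S := q ⬝ᵥ y + β * y₀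
  set t := -(a ⬝ᵥ y + a₀ * y₀)
  rcases le_or_gt t 0 with ht | ht
  · have : 0 ≤ S := add_nonneg (dotProduct_nonneg_of_nonneg hq hy) (mul_nonneg hβ hy₀)
    exact ht.trans (mul_nonneg ENNReal.toReal_nonneg this)
  have hle := konnoValue_le_of_neg (q := q) (β := β) hy hy₀ hFy (neg_pos.mp ht)
  have hSt : 0 < S / t := ENNReal.ofReal_pos.mp (hpos.trans_le hle)
  have hfin : konnoValue a a₀ F w q β ≠ ⊤ := ne_top_of_le_ne_top ENNReal.ofReal_ne_top hle
  have hμ : 0 < (konnoValue a a₀ F w q β).toReal := ENNReal.toReal_pos hpos.ne' hfin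
  rw [ENNReal.le_ofReal_iff_toReal_le hfin hSt.le, le_div_iff₀ ht] at hle
  rw [ENNReal.toReal_inv, ← div_eq_inv_mul, le_div_iff₀ hμ]
  linarith

end KonnoSubproblem

theorem DQmat_eq_certificate {n M : ℕ} {D : Matrix (Fin n) (Fin n) ℝ} (hD : D.IsSymm)
    (q θ : Fin n → ℝ) (β : ℝ) (F : Matrix (Fin M) (Fin n) ℝ) (w : Fin M → ℝ)
    (Λ : Matrix (Fin M) (Fin n) ℝ) :
    DQmat D q β =
      (1 / 2 : ℝ) • ((Gmat F w)ᵀ * midMat (D + vecMulVec q θ + Fᵀ * Λ) Λ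
          (q + β • θ - Λᵀ *ᵥ w) * Gmat F w) +
      (1 / 2 : ℝ) • (vecMulVec (Sum.elim q fun _ => β) (Sum.elim (-θ) fun _ => 1)) +
      (1 / 2 : ℝ) • (vecMulVec (Sum.elim (-θ) fun _ => 1) (Sum.elim q fun _ => β)) := by
  ext (i | _) (j | _) <;>
    simp only [DQmat, Gmat, midMat, of_apply, Matrix.add_apply, Matrix.smul_apply,
      Matrix.mul_apply, transpose_apply, vecMulVec_apply, mulVec, dotProduct, Pi.add_apply,
      Pi.sub_apply, Pi.smul_apply, Pi.neg_apply, smul_eq_mul, Sum.elim_inl, Sum.elim_inr,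
      Fintype.sum_sum_type, Finset.univ_unique, Finset.sum_singleton, ite_mul, mul_ite, one_mul,
      zero_mul, mul_zero, Finset.sum_ite_eq', Finset.mem_univ, if_true, Finset.sum_const_zero,
      add_mul, mul_add, neg_mul, mul_neg, Finset.sum_neg_distrib, Finset.sum_add_distrib,
      mul_comm (Λ _ _), hD.apply] <;>
    ring

theorem konno_cut_certificate_general {n M k : ℕ}
    (D : Matrix (Fin n) (Fin n) ℝ) (hD : D.IsSymm)
    (hDz : ∀ i j : Fin n, k ≤ (i : ℕ) ∨ k ≤ (j : ℕ) → D i j = 0)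
    (q : Fin n → ℝ) (hq : 0 ≤ q) (hqz : ∀ i : Fin n, k ≤ (i : ℕ) → q i = 0)
    (β : ℝ) (hβ : 0 ≤ β)
    (F : Matrix (Fin M) (Fin n) ℝ) (w : Fin M → ℝ)
    (mustar : Fin n → ℝ≥0∞)
    (hmu : ∀ i : Fin n, mustar i = sInf {r : ℝ≥0∞ | ∃ y : Fin n → ℝ, ∃ y₀ : ℝ,
      (fun j => D j i) ⬝ᵥ y + q i * y₀ = -1 ∧
      (∀ j, (F *ᵥ y) j ≤ y₀ * w j) ∧ 0 ≤ y ∧ 0 ≤ y₀ ∧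
      r = ENNReal.ofReal (q ⬝ᵥ y + β * y₀)})
    (hpos : ∀ i : Fin n, (i : ℕ) < k → 0 < mustar i)
    (θ : Fin n → ℝ)
    (hθ : ∀ i : Fin n, θ i = if (i : ℕ) < k then ((mustar i)⁻¹).toReal else 0) :
    ∃ (Λ : Matrix (Fin M) (Fin n) ℝ) (L : Matrix (Fin n) (Fin n) ℝ) (ℓ : Fin n → ℝ),
      (∀ i j, 0 ≤ Λ i j) ∧ (∀ i j, 0 ≤ L i j) ∧ 0 ≤ ℓ ∧
      DQmat D q β =
        (1 / 2 : ℝ) • ((Gmat F w)ᵀ * midMat L Λ ℓ * Gmat F w) +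
        (1 / 2 : ℝ) • (vecMulVec (Sum.elim q fun _ => β) (Sum.elim (-θ) fun _ => 1)) +
        (1 / 2 : ℝ) • (vecMulVec (Sum.elim (-θ) fun _ => 1) (Sum.elim q fun _ => β)) := by
  have hcut : ∀ i y y₀, 0 ≤ y → 0 ≤ y₀ → F *ᵥ y ≤ y₀ • w →
      (-(fun j => D j i) - θ i • q) ⬝ᵥ y ≤ (q i + β * θ i) * y₀ := by
    intro i y y₀ hy hy₀ hFy
    simp only [sub_dotProduct, neg_dotProduct, smul_dotProduct, smul_eq_mul]
    by_cases hi : (i : ℕ) < k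
    · have hμ : mustar i = konnoValue (fun j => D j i) (q i) F w q β := hmu i
      have := neg_le_konnoValue_inv_mul hq hβ (hμ ▸ hpos i hi) hy hy₀ hFy
      rw [hθ i, if_pos hi, hμ]
      linarith
    · have hcol : (fun j => D j i) = 0 := funext fun j => hDz j i (Or.inr (not_lt.mp hi))
      simp [hθ i, hi, hqz i (not_lt.mp hi), hcol]
  choose l hl hlF hlw using fun i => Matrix.exists_nonneg_le_vecMul_of_forall F w _ _ (hcut i)
  refine ⟨of fun m i => l i m, _, _, fun m i => hl i m, fun i j => ?_, fun i => ?_,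
    DQmat_eq_certificate hD q θ β F w _⟩
  · have := hlF j i
    simp only [Pi.sub_apply, Pi.neg_apply, Pi.smul_apply, smul_eq_mul, vecMul, dotProduct,
      mul_comm (l _ _)] at this
    simp only [Matrix.add_apply, vecMulVec_apply, Matrix.mul_apply, transpose_apply, of_apply]
    linarith
  · have := hlw i
    simp only [dotProduct, mul_comm (w _)] at this
    simp only [Pi.sub_apply, Pi.add_apply, Pi.smul_apply, smul_eq_mul, mulVec, dotProduct,
      transpose_apply, of_apply, Pi.zero_apply]
    linarith

/-- Proposition `prop:LP`. With `μ*_i > 0` for all `i ≤ k` and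
the Konno cut `θ` defined by `θ_i = (μ*_i)⁻¹` for `i ≤ k` and `θ_i = 0` otherwise,
there exist entrywise nonnegative `Λ`, `L` and `ℓ ≥ 0` such that
`[D, q; qᵀ, β] = ½ Gᵀ [L+Lᵀ, Λᵀ, ℓ; Λ, 0, 0; ℓᵀ, 0ᵀ, 0] G
 + ½ (q; β)(−θᵀ, 1) + ½ (−θ; 1)(qᵀ, β)`. -/
theorem konno_cut_certificate {n M k : ℕ} (hkn : k ≤ n)
    (D : Matrix (Fin n) (Fin n) ℝ) (hD : D.IsSymm)
    (hDz : ∀ i j : Fin n, k ≤ (i : ℕ) ∨ k ≤ (j : ℕ) → D i j = 0)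
    (q : Fin n → ℝ) (hq : 0 ≤ q) (hqz : ∀ i : Fin n, k ≤ (i : ℕ) → q i = 0)
    (β : ℝ) (hβ : 0 ≤ β)
    (F : Matrix (Fin M) (Fin n) ℝ) (w : Fin M → ℝ)
    (mustar : Fin n → ℝ≥0∞)
    (hmu : ∀ i : Fin n, mustar i = sInf {r : ℝ≥0∞ | ∃ y : Fin n → ℝ, ∃ y₀ : ℝ,
      (fun j => D j i) ⬝ᵥ y + q i * y₀ = -1 ∧
      (∀ j, (F *ᵥ y) j ≤ y₀ * w j) ∧ 0 ≤ y ∧ 0 ≤ y₀ ∧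
      r = ENNReal.ofReal (q ⬝ᵥ y + β * y₀)})
    (hpos : ∀ i : Fin n, (i : ℕ) < k → 0 < mustar i)
    (θ : Fin n → ℝ)
    (hθ : ∀ i : Fin n, θ i = if (i : ℕ) < k then ((mustar i)⁻¹).toReal else 0) :
    ∃ (Λ : Matrix (Fin M) (Fin n) ℝ) (L : Matrix (Fin n) (Fin n) ℝ) (ℓ : Fin n → ℝ),
      (∀ i j, 0 ≤ Λ i j) ∧ (∀ i j, 0 ≤ L i j) ∧ 0 ≤ ℓ ∧
      DQmat D q β =
        (1 / 2 : ℝ) • ((Gmat F w)ᵀ * midMat L Λ ℓ * Gmat F w) +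
        (1 / 2 : ℝ) • (vecMulVec (Sum.elim q fun _ => β) (Sum.elim (-θ) fun _ => 1)) +
        (1 / 2 : ℝ) • (vecMulVec (Sum.elim (-θ) fun _ => 1) (Sum.elim q fun _ => β)) :=
  konno_cut_certificate_general D hD hDz q hq hqz β hβ F w mustar hmu hpos θ hθ
end

section
/- Let k ≤ n, let D be a symmetric n×n real matrix with D_{ij} = 0 whenever i > k or j > k, let q ∈ ℝⁿ with q ≥ 0 and q_i = 0 for i > k, let β ≥ 0, F ∈ ℝ^{M×n}, w ∈ ℝ^M, and let ȳ ∈ ℝⁿ satisfy ȳ_i = 0 for all i ∈ {1,…,k}. Assume {y ∈ ℝⁿ : y ≥ 0, F y ≤ 0} = {0}, and assume that either β > 0 or q_i > 0 for all i ∈ {1,…,k}. Then there exist an entrywise nonnegative matrix T ∈ ℝ^{(n+M+1)×(n+M+1)} and θ ∈ ℝⁿ such that [D, q; qᵀ, β] = Gᵀ T G + ½ (q; β)(−θᵀ, 1 + θᵀȳ) + ½ (−θ; 1 + θᵀȳ)(qᵀ, β), where G := [Iₙ, 0; −F, w; 0ᵀ, 1] ∈ ℝ^{(n+M+1)×(n+1)}.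 -/
open Matrix

theorem Matrix.exists_nonneg_vecMul_pos {m n : Type*} [Fintype m] [Fintype n]
    (F : Matrix m n ℝ) (hF : ∀ y, 0 ≤ y → F *ᵥ y ≤ 0 → y = 0) :
    ∃ l : m → ℝ, 0 ≤ l ∧ ∀ j, 0 < (l ᵥ* F) j := by
  classical
  have hK : Disjoint ((-F).mulVecLin '' stdSimplex ℝ n) (ProperCone.positive ℝ (m → ℝ)) := by
    rw [Set.disjoint_left]
    rintro _ ⟨y, ⟨hy0, hy1⟩, rfl⟩ hpos
    have hFy : F *ᵥ y ≤ 0 := by simpa [neg_mulVec] using hpos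
    simp [hF y hy0 hFy] at hy1
  obtain ⟨f, hf0, hfK⟩ := (ProperCone.positive ℝ (m → ℝ)).hyperplane_separation
    ((convex_stdSimplex ℝ n).linear_image _)
    ((isCompact_stdSimplex ℝ n).image (LinearMap.continuous_of_finiteDimensional _)) hK
  have hf (x : m → ℝ) : f x = ∑ i, x i * f (Pi.single i 1) := by
    conv_lhs => rw [pi_eq_sum_univ' x]
    simp
  refine ⟨fun i => f (Pi.single i 1), fun i => hf0 _ (by simp [Pi.single_nonneg]), fun j => ?_⟩
  have hj := hfK _ ⟨Pi.single j 1, single_mem_stdSimplex ℝ j, rfl⟩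
  rw [hf] at hj
  simpa [vecMul, dotProduct, mul_comm] using hj

theorem Matrix.exists_nonneg_one_le_vecMul {m n : Type*} [Fintype m] [Fintype n]
    (F : Matrix m n ℝ) (hF : ∀ y, 0 ≤ y → F *ᵥ y ≤ 0 → y = 0) :
    ∃ l : m → ℝ, 0 ≤ l ∧ ∀ j, 1 ≤ (l ᵥ* F) j := by
  obtain ⟨l, hl, hlF⟩ := F.exists_nonneg_vecMul_pos hF
  set t := ∑ j, ((l ᵥ* F) j)⁻¹
  have ht (j) : ((l ᵥ* F) j)⁻¹ ≤ t :=
    Finset.single_le_sum (fun j _ => (inv_pos.2 (hlF j)).le) (Finset.mem_univ j)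
  have ht0 : 0 ≤ t := Finset.sum_nonneg fun j _ => (inv_pos.2 (hlF j)).le
  refine ⟨t • l, smul_nonneg ht0 hl, fun j => ?_⟩
  calc 1 = ((l ᵥ* F) j)⁻¹ * (l ᵥ* F) j := (inv_mul_cancel₀ (hlF j).ne').symm
    _ ≤ t * (l ᵥ* F) j := mul_le_mul_of_nonneg_right (ht j) (hlF j).le
    _ = ((t • l) ᵥ* F) j := by simp [smul_vecMul]

theorem Matrix.exists_nonneg_forall_neg_le {m n : Type*} [Finite m] [Finite n]
    (D : Matrix m n ℝ) : ∃ B, 0 ≤ B ∧ ∀ i j, -B ≤ D i j := by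
  obtain ⟨C, hC⟩ := Finite.exists_le fun p : m × n => -D p.1 p.2
  exact ⟨max C 0, le_max_right C 0, fun i j => by
    linarith [hC (i, j), le_max_left C 0]⟩

section Certificate

variable {n M k : ℕ}

variable (n M) in
noncomputable def coordInclusion : Matrix ((Fin n ⊕ Fin M) ⊕ Unit) (Fin n ⊕ Unit) ℝ :=
  (1 : Matrix ((Fin n ⊕ Fin M) ⊕ Unit) ((Fin n ⊕ Fin M) ⊕ Unit) ℝ).submatrix id
    (Sum.map Sum.inl id)

theorem coordInclusion_transpose_mul_Gmat (F : Matrix (Fin M) (Fin n) ℝ) (w : Fin M → ℝ) :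
    (coordInclusion n M)ᵀ * Gmat F w = 1 := by
  rw [coordInclusion, transpose_submatrix, transpose_one, ← submatrix_id_id (Gmat F w),
    ← submatrix_mul _ _ _ _ _ Function.bijective_id, Matrix.one_mul]
  ext (i | _) (j | _) <;> simp [Gmat, one_apply]

variable (M) in
noncomputable def extendByZero (P : Matrix (Fin n ⊕ Unit) (Fin n ⊕ Unit) ℝ) :
    Matrix ((Fin n ⊕ Fin M) ⊕ Unit) ((Fin n ⊕ Fin M) ⊕ Unit) ℝ :=
  coordInclusion n M * P * (coordInclusion n M)ᵀ

theorem Gmat_transpose_mul_extendByZero_mul_Gmat (F : Matrix (Fin M) (Fin n) ℝ) (w : Fin M → ℝ)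
    (P : Matrix (Fin n ⊕ Unit) (Fin n ⊕ Unit) ℝ) :
    (Gmat F w)ᵀ * extendByZero M P * Gmat F w = P := by
  have h := coordInclusion_transpose_mul_Gmat F w
  calc _ = ((coordInclusion n M)ᵀ * Gmat F w)ᵀ * P * ((coordInclusion n M)ᵀ * Gmat F w) := by
        simp only [extendByZero, transpose_mul, transpose_transpose, Matrix.mul_assoc]
    _ = P := by rw [h, transpose_one, Matrix.one_mul, Matrix.mul_one]

noncomputable def gmatNullVec (F : Matrix (Fin M) (Fin n) ℝ) (w : Fin M → ℝ) (l : Fin M → ℝ) :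
    (Fin n ⊕ Fin M) ⊕ Unit → ℝ :=
  Sum.elim (Sum.elim (l ᵥ* F) l) fun _ => -(l ⬝ᵥ w)

theorem gmatNullVec_vecMul_Gmat (F : Matrix (Fin M) (Fin n) ℝ) (w : Fin M → ℝ) (l : Fin M → ℝ) :
    gmatNullVec F w l ᵥ* Gmat F w = 0 := by
  ext (j | _) <;> simp [gmatNullVec, Gmat, vecMul, dotProduct, Fintype.sum_sum_type]

noncomputable def certificateMatrix (F : Matrix (Fin M) (Fin n) ℝ) (w : Fin M → ℝ)
    (P : Matrix (Fin n ⊕ Unit) (Fin n ⊕ Unit) ℝ) (a : Fin n → ℝ) (l : Fin M → ℝ) :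
    Matrix ((Fin n ⊕ Fin M) ⊕ Unit) ((Fin n ⊕ Fin M) ⊕ Unit) ℝ :=
  extendByZero M P + vecMulVec (Sum.elim (Sum.elim a 0) 0) (gmatNullVec F w l) +
    vecMulVec (gmatNullVec F w l) (Sum.elim (Sum.elim a 0) 0)

theorem Gmat_transpose_mul_certificateMatrix_mul_Gmat (F : Matrix (Fin M) (Fin n) ℝ)
    (w : Fin M → ℝ) (P : Matrix (Fin n ⊕ Unit) (Fin n ⊕ Unit) ℝ) (a : Fin n → ℝ)
    (l : Fin M → ℝ) :
    (Gmat F w)ᵀ * certificateMatrix F w P a l * Gmat F w = P := by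
  simp only [certificateMatrix, Matrix.add_mul, Matrix.mul_add,
    Gmat_transpose_mul_extendByZero_mul_Gmat, mul_vecMulVec, vecMulVec_mul, mulVec_transpose,
    gmatNullVec_vecMul_Gmat, vecMulVec_zero, zero_vecMulVec, add_zero]

theorem certificateMatrix_nonneg (F : Matrix (Fin M) (Fin n) ℝ) (w : Fin M → ℝ)
    (P : Matrix (Fin n ⊕ Unit) (Fin n ⊕ Unit) ℝ) {a : Fin n → ℝ} {l : Fin M → ℝ}
    (ha : 0 ≤ a) (hl : 0 ≤ l)
    (hxx : ∀ i j, 0 ≤ P (.inl i) (.inl j) + a i * (l ᵥ* F) j + (l ᵥ* F) i * a j)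
    (hxr : ∀ i, a i * (l ⬝ᵥ w) ≤ P (.inl i) (.inr ()))
    (hrx : ∀ j, (l ⬝ᵥ w) * a j ≤ P (.inr ()) (.inl j))
    (hrr : 0 ≤ P (.inr ()) (.inr ())) (p r : (Fin n ⊕ Fin M) ⊕ Unit) :
    0 ≤ certificateMatrix F w P a l p r := by
  rcases p with (i | m) | _ <;> rcases r with (j | m') | _ <;>
    simp [certificateMatrix, extendByZero, coordInclusion, gmatNullVec, mul_apply, one_apply,
      Fintype.sum_sum_type, vecMulVec_apply]
  exacts [hxx i j, mul_nonneg (ha i) (hl m'), hxr i, mul_nonneg (hl m) (ha j), hrx j, hrr]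

noncomputable def slackMatrix (D : Matrix (Fin n) (Fin n) ℝ) (q : Fin n → ℝ) (β : ℝ)
    (θ : Fin n → ℝ) : Matrix (Fin n ⊕ Unit) (Fin n ⊕ Unit) ℝ :=
  DQmat D q β - (1 / 2 : ℝ) • vecMulVec (Sum.elim q fun _ => β) (Sum.elim (-θ) fun _ => 1) -
    (1 / 2 : ℝ) • vecMulVec (Sum.elim (-θ) fun _ => 1) (Sum.elim q fun _ => β)

section slackMatrix

variable (D : Matrix (Fin n) (Fin n) ℝ) (q : Fin n → ℝ) (β : ℝ) (θ : Fin n → ℝ)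

@[simp]
theorem slackMatrix_inl_inl (i j : Fin n) :
    slackMatrix D q β θ (.inl i) (.inl j) = D i j + (q i * θ j + θ i * q j) / 2 := by
  simp [slackMatrix, DQmat, vecMulVec_apply]
  ring

@[simp]
theorem slackMatrix_inl_inr (i : Fin n) (u : Unit) :
    slackMatrix D q β θ (.inl i) (.inr u) = (q i + β * θ i) / 2 := by
  simp [slackMatrix, DQmat, vecMulVec_apply]
  ring

@[simp]
theorem slackMatrix_inr_inl (u : Unit) (j : Fin n) :
    slackMatrix D q β θ (.inr u) (.inl j) = (q j + β * θ j) / 2 := by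
  simp [slackMatrix, DQmat, vecMulVec_apply]
  ring

@[simp]
theorem slackMatrix_inr_inr (u v : Unit) : slackMatrix D q β θ (.inr u) (.inr v) = 0 := by
  simp [slackMatrix, DQmat, vecMulVec_apply]
  ring

end slackMatrix

structure CertificateData (k : ℕ) (D : Matrix (Fin n) (Fin n) ℝ) (q : Fin n → ℝ) (β : ℝ)
    (F : Matrix (Fin M) (Fin n) ℝ) (w : Fin M → ℝ) (θ a : Fin n → ℝ) (l : Fin M → ℝ) : Prop where
  theta_eq_zero : ∀ i : Fin n, k ≤ (i : ℕ) → θ i = 0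
  a_nonneg : 0 ≤ a
  l_nonneg : 0 ≤ l
  block_nonneg : ∀ i j,
    0 ≤ D i j + (q i * θ j + θ i * q j) / 2 + a i * (l ᵥ* F) j + (l ᵥ* F) i * a j
  border_le : ∀ i, a i * (l ⬝ᵥ w) ≤ (q i + β * θ i) / 2

theorem CertificateData.exists_certificate {D : Matrix (Fin n) (Fin n) ℝ} {q : Fin n → ℝ} {β : ℝ}
    {F : Matrix (Fin M) (Fin n) ℝ} {w : Fin M → ℝ} {θ a : Fin n → ℝ} {l : Fin M → ℝ}
    (h : CertificateData k D q β F w θ a l) {ybar : Fin n → ℝ}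
    (hybar : ∀ i : Fin n, (i : ℕ) < k → ybar i = 0) :
    ∃ (T : Matrix ((Fin n ⊕ Fin M) ⊕ Unit) ((Fin n ⊕ Fin M) ⊕ Unit) ℝ)
      (θ : Fin n → ℝ),
      (∀ i j, 0 ≤ T i j) ∧
      DQmat D q β =
        (Gmat F w)ᵀ * T * Gmat F w +
        (1 / 2 : ℝ) • (vecMulVec (Sum.elim q fun _ => β)
          (Sum.elim (-θ) fun _ => 1 + θ ⬝ᵥ ybar)) +
        (1 / 2 : ℝ) • (vecMulVec (Sum.elim (-θ) fun _ => 1 + θ ⬝ᵥ ybar)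
          (Sum.elim q fun _ => β)) := by
  have hθy : θ ⬝ᵥ ybar = 0 := Finset.sum_eq_zero fun i _ => by
    rcases lt_or_ge (i : ℕ) k with hi | hi
    · simp [hybar i hi]
    · simp [h.theta_eq_zero i hi]
  refine ⟨certificateMatrix F w (slackMatrix D q β θ) a l, θ,
    certificateMatrix_nonneg F w _ h.a_nonneg h.l_nonneg (fun i j => ?_) (fun i => ?_)
      (fun j => ?_) ?_, ?_⟩
  · rw [slackMatrix_inl_inl]
    exact h.block_nonneg i j
  · rw [slackMatrix_inl_inr]
    exact h.border_le i
  · rw [slackMatrix_inr_inl, mul_comm]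
    exact h.border_le j
  · rw [slackMatrix_inr_inr]
  · rw [hθy, add_zero, Gmat_transpose_mul_certificateMatrix_mul_Gmat, slackMatrix]
    abel

end Certificate

section Cases

variable {n M k : ℕ} {D : Matrix (Fin n) (Fin n) ℝ} {q : Fin n → ℝ} {β B : ℝ}

theorem exists_certificateData_of_pos_beta
    (hDz : ∀ i j : Fin n, k ≤ (i : ℕ) ∨ k ≤ (j : ℕ) → D i j = 0) (hq : 0 ≤ q) (hβ : 0 < β)
    (hB0 : 0 ≤ B) (hB : ∀ i j, -B ≤ D i j) (F : Matrix (Fin M) (Fin n) ℝ) (w : Fin M → ℝ)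
    {l : Fin M → ℝ} (hl : 0 ≤ l) (hlF : ∀ j, 1 ≤ (l ᵥ* F) j) :
    ∃ θ a, CertificateData k D q β F w θ a l := by
  set s := 2 * B * |l ⬝ᵥ w| / β
  have hs : β * s / 2 = B * |l ⬝ᵥ w| := by simp only [s]; field_simp
  set θ : Fin n → ℝ := fun i => if (i : ℕ) < k then s else 0
  set a : Fin n → ℝ := fun i => if (i : ℕ) < k then B else 0
  have hθ (i : Fin n) : 0 ≤ θ i := by simp only [θ]; split_ifs <;> positivity
  have ha (i : Fin n) : 0 ≤ a i := by simp only [a]; split_ifs <;> simp [hB0]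
  have hu (j : Fin n) : 0 ≤ (l ᵥ* F) j := zero_le_one.trans (hlF j)
  refine ⟨θ, a, ⟨fun i hi => if_neg hi.not_gt, ha, hl, fun i j => ?_, fun i => ?_⟩⟩
  · have hmid : 0 ≤ (q i * θ j + θ i * q j) / 2 :=
      div_nonneg (add_nonneg (mul_nonneg (hq i) (hθ j)) (mul_nonneg (hθ i) (hq j))) zero_le_two
    have hD : -D i j ≤ a i * (l ᵥ* F) j + (l ᵥ* F) i * a j := by
      have hij := mul_nonneg (ha i) (hu j)
      have hji := mul_nonneg (hu i) (ha j)
      rcases lt_or_ge (i : ℕ) k with hi | hi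
      · have : B ≤ a i * (l ᵥ* F) j := by simpa [a, hi] using mul_le_mul_of_nonneg_left (hlF j) hB0
        linarith [hB i j]
      rcases lt_or_ge (j : ℕ) k with hj | hj
      · have : B ≤ (l ᵥ* F) i * a j := by simpa [a, hj] using mul_le_mul_of_nonneg_right (hlF i) hB0
        linarith [hB i j]
      · linarith [hDz i j (.inl hi)]
    linarith
  · rcases lt_or_ge (i : ℕ) k with hi | hi
    · have hθi : θ i = s := if_pos hi
      have hai : a i = B := if_pos hi
      rw [hθi, hai]
      have hqi : 0 ≤ q i := hq i
      linarith [mul_le_mul_of_nonneg_left (le_abs_self (l ⬝ᵥ w)) hB0]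
    · have hθi : θ i = 0 := if_neg hi.not_gt
      have hai : a i = 0 := if_neg hi.not_gt
      have hqi : 0 ≤ q i := hq i
      rw [hθi, hai]
      linarith

theorem exists_certificateData_of_pos_q
    (hDz : ∀ i j : Fin n, k ≤ (i : ℕ) ∨ k ≤ (j : ℕ) → D i j = 0) (hq : 0 ≤ q)
    (hqk : ∀ i : Fin n, (i : ℕ) < k → 0 < q i) (hβ : 0 ≤ β)
    (hB0 : 0 ≤ B) (hB : ∀ i j, -B ≤ D i j) (F : Matrix (Fin M) (Fin n) ℝ) (w : Fin M → ℝ) :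
    ∃ θ, CertificateData k D q β F w θ 0 0 := by
  set θ : Fin n → ℝ := fun i => if h : (i : ℕ) < k then B / q i else 0
  have hθ (i : Fin n) : 0 ≤ θ i := by
    simp only [θ]; split_ifs with hi
    · exact div_nonneg hB0 (hqk i hi).le
    · exact le_rfl
  refine ⟨θ, ⟨fun i hi => dif_neg hi.not_gt, le_rfl, le_rfl, fun i j => ?_, fun i => ?_⟩⟩
  · simp only [Pi.zero_apply, zero_vecMul, mul_zero, add_zero]
    by_cases hij : (i : ℕ) < k ∧ (j : ℕ) < k
    · obtain ⟨hi, hj⟩ := hij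
      have hqi := hqk i hi
      have hqj := hqk j hj
      have hθi : θ i = B / q i := dif_pos hi
      have hθj : θ j = B / q j := dif_pos hj
      have hamgm : (q i * θ j + θ i * q j) / 2 - B = B * (q i - q j) ^ 2 / (2 * (q i * q j)) := by
        rw [hθi, hθj]
        field_simp
        ring
      have : 0 ≤ B * (q i - q j) ^ 2 / (2 * (q i * q j)) := by positivity
      linarith [hB i j]
    · rw [not_and_or, not_lt, not_lt] at hij
      rw [hDz i j hij, zero_add]
      exact div_nonneg (add_nonneg (mul_nonneg (hq i) (hθ j)) (mul_nonneg (hθ i) (hq j)))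
        zero_le_two
  · simp only [Pi.zero_apply, zero_mul]
    exact div_nonneg (add_nonneg (hq i) (mul_nonneg hβ (hθ i))) zero_le_two

end Cases

theorem konno_certificate_exists_general {n M k : ℕ} (D : Matrix (Fin n) (Fin n) ℝ)
    (hDz : ∀ i j : Fin n, k ≤ (i : ℕ) ∨ k ≤ (j : ℕ) → D i j = 0)
    (q : Fin n → ℝ) (hq : 0 ≤ q)
    (β : ℝ) (hβ : 0 ≤ β)
    (F : Matrix (Fin M) (Fin n) ℝ) (w : Fin M → ℝ)
    (ybar : Fin n → ℝ) (hybar : ∀ i : Fin n, (i : ℕ) < k → ybar i = 0)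
    (hbdd : {y : Fin n → ℝ | 0 ≤ y ∧ F *ᵥ y ≤ 0} = {0})
    (hcase : 0 < β ∨ ∀ i : Fin n, (i : ℕ) < k → 0 < q i) :
    ∃ (T : Matrix ((Fin n ⊕ Fin M) ⊕ Unit) ((Fin n ⊕ Fin M) ⊕ Unit) ℝ)
      (θ : Fin n → ℝ),
      (∀ i j, 0 ≤ T i j) ∧
      DQmat D q β =
        (Gmat F w)ᵀ * T * Gmat F w +
        (1 / 2 : ℝ) • (vecMulVec (Sum.elim q fun _ => β)
          (Sum.elim (-θ) fun _ => 1 + θ ⬝ᵥ ybar)) +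
        (1 / 2 : ℝ) • (vecMulVec (Sum.elim (-θ) fun _ => 1 + θ ⬝ᵥ ybar)
          (Sum.elim q fun _ => β)) := by
  obtain ⟨B, hB0, hB⟩ := D.exists_nonneg_forall_neg_le
  obtain ⟨θ, a, l, h⟩ : ∃ θ a l, CertificateData k D q β F w θ a l := by
    rcases hcase with hβpos | hqk
    · obtain ⟨l, hl, hlF⟩ := F.exists_nonneg_one_le_vecMul fun y hy hFy => hbdd.subset ⟨hy, hFy⟩
      obtain ⟨θ, a, h⟩ := exists_certificateData_of_pos_beta hDz hq hβpos hB0 hB F w hl hlF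
      exact ⟨θ, a, l, h⟩
    · obtain ⟨θ, h⟩ := exists_certificateData_of_pos_q hDz hq hqk hβ hB0 hB F w
      exact ⟨θ, 0, 0, h⟩
  exact h.exists_certificate hybar

/-- Proposition `prop:LPexistence`. Assume the recession cone
condition `{y ≥ 0, Fy ≤ 0} = {0}` (boundedness of the feasible region) and that
`β > 0` or `q_i > 0` for all `i ≤ k`. Then there exist an entrywise nonnegative
`T` and `θ` with
`[D, q; qᵀ, β] = Gᵀ T G + ½ (q; β)(−θᵀ, 1 + θᵀȳ) + ½ (−θ; 1 + θᵀȳ)(qᵀ, β)`. -/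
theorem konno_certificate_exists {n M k : ℕ} (hkn : k ≤ n)
    (D : Matrix (Fin n) (Fin n) ℝ) (hD : D.IsSymm)
    (hDz : ∀ i j : Fin n, k ≤ (i : ℕ) ∨ k ≤ (j : ℕ) → D i j = 0)
    (q : Fin n → ℝ) (hq : 0 ≤ q) (hqz : ∀ i : Fin n, k ≤ (i : ℕ) → q i = 0)
    (β : ℝ) (hβ : 0 ≤ β)
    (F : Matrix (Fin M) (Fin n) ℝ) (w : Fin M → ℝ)
    (ybar : Fin n → ℝ) (hybar : ∀ i : Fin n, (i : ℕ) < k → ybar i = 0)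
    (hbdd : {y : Fin n → ℝ | 0 ≤ y ∧ F *ᵥ y ≤ 0} = {0})
    (hcase : 0 < β ∨ ∀ i : Fin n, (i : ℕ) < k → 0 < q i) :
    ∃ (T : Matrix ((Fin n ⊕ Fin M) ⊕ Unit) ((Fin n ⊕ Fin M) ⊕ Unit) ℝ)
      (θ : Fin n → ℝ),
      (∀ i j, 0 ≤ T i j) ∧
      DQmat D q β =
        (Gmat F w)ᵀ * T * Gmat F w +
        (1 / 2 : ℝ) • (vecMulVec (Sum.elim q fun _ => β)
          (Sum.elim (-θ) fun _ => 1 + θ ⬝ᵥ ybar)) +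
        (1 / 2 : ℝ) • (vecMulVec (Sum.elim (-θ) fun _ => 1 + θ ⬝ᵥ ybar)
          (Sum.elim q fun _ => β)) :=
  konno_certificate_exists_general D hDz q hq β hβ F w ybar hybar hbdd hcase
end
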